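/- Let φ : ℝ → ℝ be four times continuously differentiable on [a,b] with a < b, and suppose φ'' is convex on [a,b]. Then 0 ≤ (φ(a)+φ(b))/6 + (2/3)φ((a+b)/2) - (1/(b-a))∫_a^b φ(t) dt ≤ ((b-a)²/162)[(φ''(a)+φ''(b))/2 - φ''((a+b)/2)]. -/

import Mathlib

/-!
Put `m = (a + b) / 2`, `h = (b - a) / 2` and fold the interval at `m`. Two integrations by parts
against the Peano kernel `K(s) = (h - s)(3s - h)/6` (so that `K'' = -1`) express `2h` times the
Simpson error as `∫₀ʰ K(s) g(s) ds` with `g(s) = φ''(m + s) + φ''(m - s)`.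

`K` has mean zero on `[0, h]` and changes sign from negative to positive at `h / 3`, while `g` is
convex with its minimum at `s = 0`, hence nondecreasing: replacing `g` by `g - g(h/3)` makes the
integrand nonnegative. For the upper bound, `g - g(0)` is nonnegative and below its chord, so
only the positive part of `K` contributes, and `∫_{h/3}^h s K(s) ds = 4h⁴/243`; this gives the
constant `1/243`, which is better than `1/162`.
-/

open Set intervalIntegral
open MeasureTheory (volume)

noncomputable def simpsonKernel (h s : ℝ) : ℝ := (h - s) * (3 * s - h) / 6

section SimpsonKernel

variable {h s : ℝ}

lemma continuous_simpsonKernel : Continuous (simpsonKernel h) := by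
  unfold simpsonKernel; fun_prop

lemma hasDerivAt_simpsonKernel : HasDerivAt (simpsonKernel h) ((2 * h - 3 * s) / 3) s := by
  have hp := ((hasDerivAt_id s).const_sub h).mul (((hasDerivAt_id s).const_mul 3).sub_const h)
  exact (hp.div_const 6).congr_deriv (by simp; ring)

lemma simpsonKernel_nonpos (hh : 0 ≤ h) (hs : s ≤ h / 3) : simpsonKernel h s ≤ 0 := by
  unfold simpsonKernel
  have : (h - s) * (3 * s - h) ≤ 0 := mul_nonpos_of_nonneg_of_nonpos (by linarith) (by linarith)
  linarith

lemma simpsonKernel_nonneg (hs : h / 3 ≤ s) (hsh : s ≤ h) : 0 ≤ simpsonKernel h s := by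
  unfold simpsonKernel
  have : 0 ≤ (h - s) * (3 * s - h) := mul_nonneg (by linarith) (by linarith)
  linarith

lemma integral_simpsonKernel : ∫ s in (0 : ℝ)..h, simpsonKernel h s = 0 := by
  have hk : ∀ s, simpsonKernel h s = 2 * h / 3 * s - 1 / 2 * s ^ 2 - h ^ 2 / 6 := fun s => by
    rw [simpsonKernel]; ring
  simp only [hk]
  rw [integral_sub (Continuous.intervalIntegrable (by fun_prop) _ _)
      (Continuous.intervalIntegrable (by fun_prop) _ _),
    integral_sub (Continuous.intervalIntegrable (by fun_prop) _ _)
      (Continuous.intervalIntegrable (by fun_prop) _ _),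
    integral_const_mul, integral_const_mul, integral_id, integral_pow, integral_const]
  simp only [smul_eq_mul]
  ring

lemma integral_mul_simpsonKernel :
    ∫ s in (h / 3)..h, s * simpsonKernel h s = 4 * h ^ 4 / 243 := by
  have hk : ∀ s, s * simpsonKernel h s = 2 * h / 3 * s ^ 2 - 1 / 2 * s ^ 3 - h ^ 2 / 6 * s :=
    fun s => by rw [simpsonKernel]; ring
  simp only [hk]
  rw [integral_sub (Continuous.intervalIntegrable (by fun_prop) _ _)
      (Continuous.intervalIntegrable (by fun_prop) _ _),
    integral_sub (Continuous.intervalIntegrable (by fun_prop) _ _)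
      (Continuous.intervalIntegrable (by fun_prop) _ _),
    integral_const_mul, integral_const_mul, integral_const_mul, integral_id, integral_pow,
    integral_pow]
  ring

lemma IntervalIntegrable.simpsonKernel_mul {g : ℝ → ℝ} {a b : ℝ}
    (hg : IntervalIntegrable g volume a b) :
    IntervalIntegrable (fun s => simpsonKernel h s * g s) volume a b :=
  hg.continuousOn_mul continuous_simpsonKernel.continuousOn

lemma integral_simpsonKernel_mul_sub_const {g : ℝ → ℝ}
    (hg : IntervalIntegrable g volume 0 h) (c : ℝ) :
    ∫ s in (0 : ℝ)..h, simpsonKernel h s * (g s - c)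
      = ∫ s in (0 : ℝ)..h, simpsonKernel h s * g s := by
  simp only [mul_sub]
  rw [integral_sub hg.simpsonKernel_mul
      (continuous_simpsonKernel.intervalIntegrable 0 h |>.mul_const c),
    integral_mul_const, integral_simpsonKernel, zero_mul, sub_zero]

theorem integral_simpsonKernel_mul_deriv2 {F F' F'' : ℝ → ℝ} (hh : 0 ≤ h)
    (hF : ∀ s ∈ Icc 0 h, HasDerivWithinAt F (F' s) (Icc 0 h) s)
    (hF' : ∀ s ∈ Icc 0 h, HasDerivWithinAt F' (F'' s) (Icc 0 h) s)
    (hF''i : IntervalIntegrable F'' volume 0 h) :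
    ∫ s in (0 : ℝ)..h, simpsonKernel h s * F'' s
      = h / 3 * F h + 2 * h / 3 * F 0 + h ^ 2 / 6 * F' 0 - ∫ s in (0 : ℝ)..h, F s := by
  have hFc : ContinuousOn F (Icc 0 h) := fun s hs => (hF s hs).continuousWithinAt
  have hF'c : ContinuousOn F' (Icc 0 h) := fun s hs => (hF' s hs).continuousWithinAt
  -- `W' = K F'' + F` because `K'' = -1`: both integrations by parts at once.
  set W : ℝ → ℝ := fun s => simpsonKernel h s * F' s - (2 * h - 3 * s) / 3 * F s
  have hW : ∀ s ∈ Ioo 0 h, HasDerivAt W (simpsonKernel h s * F'' s + F s) s := by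
    intro s hs
    have hIcc : Icc 0 h ∈ nhds s := Icc_mem_nhds hs.1 hs.2
    have hl : HasDerivAt (fun s : ℝ => (2 * h - 3 * s) / 3) (-1) s := by
      simpa using (((hasDerivAt_id s).const_mul 3).const_sub (2 * h)).div_const 3
    have hFs := (hF s (Ioo_subset_Icc_self hs)).hasDerivAt hIcc
    have hF's := (hF' s (Ioo_subset_Icc_self hs)).hasDerivAt hIcc
    exact ((hasDerivAt_simpsonKernel.mul hF's).sub (hl.mul hFs)).congr_deriv (by ring)
  have hFi : IntervalIntegrable F volume 0 h := hFc.intervalIntegrable_of_Icc hh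
  have hWc : ContinuousOn W (Icc 0 h) :=
    (continuous_simpsonKernel.continuousOn.mul hF'c).sub
      ((by fun_prop : Continuous fun s : ℝ => (2 * h - 3 * s) / 3).continuousOn.mul hFc)
  have hFTC : ∫ s in (0 : ℝ)..h, (simpsonKernel h s * F'' s + F s) = W h - W 0 :=
    integral_eq_sub_of_hasDerivAt_of_le hh hWc hW (hF''i.simpsonKernel_mul.add hFi)
  rw [integral_add hF''i.simpsonKernel_mul hFi] at hFTC
  have hk0 : simpsonKernel h 0 = -(h ^ 2 / 6) := by rw [simpsonKernel]; ring
  have hkh : simpsonKernel h h = 0 := by rw [simpsonKernel]; ring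
  simp only [W, hk0, hkh] at hFTC
  linarith

theorem integral_simpsonKernel_mul_nonneg {g : ℝ → ℝ} (hh : 0 ≤ h)
    (hg : MonotoneOn g (Icc 0 h)) (hgi : IntervalIntegrable g volume 0 h) :
    0 ≤ ∫ s in (0 : ℝ)..h, simpsonKernel h s * g s := by
  have hc : h / 3 ∈ Icc 0 h := ⟨by linarith, by linarith⟩
  rw [← integral_simpsonKernel_mul_sub_const hgi (g (h / 3))]
  refine integral_nonneg hh fun s hs => ?_
  rcases le_total s (h / 3) with hs3 | hs3
  · exact mul_nonneg_of_nonpos_of_nonpos (simpsonKernel_nonpos hh hs3)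
      (sub_nonpos.2 (hg hs hc hs3))
  · exact mul_nonneg (simpsonKernel_nonneg hs3 hs.2) (sub_nonneg.2 (hg hc hs hs3))

theorem integral_simpsonKernel_mul_le {c D : ℝ} {g : ℝ → ℝ} (hh : 0 < h)
    (hgi : IntervalIntegrable g volume 0 h) (hlow : ∀ s ∈ Icc 0 h, c ≤ g s)
    (hup : ∀ s ∈ Icc 0 h, g s ≤ c + s / h * D) :
    ∫ s in (0 : ℝ)..h, simpsonKernel h s * g s ≤ 4 * h ^ 3 / 243 * D := by
  have hc : h / 3 ∈ Icc 0 h := ⟨by linarith, by linarith⟩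
  have hc' : h / 3 ∈ uIcc 0 h := by rwa [uIcc_of_le hh.le]
  have hki : IntervalIntegrable (fun s => simpsonKernel h s * (g s - c)) volume 0 h :=
    (hgi.sub intervalIntegrable_const).simpsonKernel_mul
  rw [← integral_simpsonKernel_mul_sub_const hgi c,
    ← integral_add_adjacent_intervals (hki.mono_set (uIcc_subset_uIcc_left hc'))
      (hki.mono_set (uIcc_subset_uIcc_right hc'))]
  have hleft : ∫ s in (0 : ℝ)..(h / 3), simpsonKernel h s * (g s - c) ≤ 0 := by
    calc _ ≤ ∫ _ in (0 : ℝ)..(h / 3), (0 : ℝ) :=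
          integral_mono_on hc.1 (hki.mono_set (uIcc_subset_uIcc_left hc'))
            intervalIntegrable_const fun s hs =>
              mul_nonpos_of_nonpos_of_nonneg (simpsonKernel_nonpos hh.le hs.2)
                (sub_nonneg.2 (hlow s ⟨hs.1, hs.2.trans hc.2⟩))
      _ = 0 := integral_zero
  have hright : ∫ s in (h / 3)..h, simpsonKernel h s * (g s - c)
      ≤ ∫ s in (h / 3)..h, s * simpsonKernel h s * (D / h) := by
    refine integral_mono_on hc.2 (hki.mono_set (uIcc_subset_uIcc_right hc'))
      ((continuous_id.mul continuous_simpsonKernel).intervalIntegrable _ _ |>.mul_const _)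
      fun s hs => ?_
    have hs0 : s ∈ Icc 0 h := ⟨hc.1.trans hs.1, hs.2⟩
    calc simpsonKernel h s * (g s - c) ≤ simpsonKernel h s * (s / h * D) :=
          mul_le_mul_of_nonneg_left (by linarith [hup s hs0]) (simpsonKernel_nonneg hs.1 hs.2)
      _ = s * simpsonKernel h s * (D / h) := by ring
  rw [integral_mul_const, integral_mul_simpsonKernel] at hright
  calc _ ≤ 0 + 4 * h ^ 4 / 243 * (D / h) := add_le_add hleft hright
    _ = 4 * h ^ 3 / 243 * D := by field_simp; ring

end SimpsonKernel

section Symmetrization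

variable {f f' : ℝ → ℝ} {m h s : ℝ}

lemma mapsTo_const_add_Icc : MapsTo (fun s => m + s) (Icc 0 h) (Icc (m - h) (m + h)) :=
  fun _ hs => ⟨by linarith [hs.1, hs.2], by linarith [hs.2]⟩

lemma mapsTo_const_sub_Icc : MapsTo (fun s => m - s) (Icc 0 h) (Icc (m - h) (m + h)) :=
  fun _ hs => ⟨by linarith [hs.2], by linarith [hs.1, hs.2]⟩

lemma ContinuousOn.comp_const_add_Icc (hf : ContinuousOn f (Icc (m - h) (m + h))) :
    ContinuousOn (fun s => f (m + s)) (Icc 0 h) :=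
  hf.comp (by fun_prop) mapsTo_const_add_Icc

lemma ContinuousOn.comp_const_sub_Icc (hf : ContinuousOn f (Icc (m - h) (m + h))) :
    ContinuousOn (fun s => f (m - s)) (Icc 0 h) :=
  hf.comp (by fun_prop) mapsTo_const_sub_Icc

lemma integral_comp_add_add_comp_sub (hh : 0 ≤ h) (hf : ContinuousOn f (Icc (m - h) (m + h))) :
    ∫ s in (0 : ℝ)..h, (f (m + s) + f (m - s)) = ∫ x in (m - h)..(m + h), f x := by
  have hfi : IntervalIntegrable f volume (m - h) (m + h) :=
    hf.intervalIntegrable_of_Icc (by linarith)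
  have hm : m ∈ uIcc (m - h) (m + h) := by rw [uIcc_of_le (by linarith)]; constructor <;> linarith
  rw [integral_add (hf.comp_const_add_Icc.intervalIntegrable_of_Icc hh)
      (hf.comp_const_sub_Icc.intervalIntegrable_of_Icc hh),
    integral_comp_add_left, integral_comp_sub_left, add_zero, sub_zero, add_comm,
    integral_add_adjacent_intervals (hfi.mono_set (uIcc_subset_uIcc_left hm))
      (hfi.mono_set (uIcc_subset_uIcc_right hm))]

lemma hasDerivWithinAt_comp_const_add_Icc
    (hf : ∀ x ∈ Icc (m - h) (m + h), HasDerivWithinAt f (f' x) (Icc (m - h) (m + h)) x)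
    (hs : s ∈ Icc 0 h) :
    HasDerivWithinAt (fun s => f (m + s)) (f' (m + s)) (Icc 0 h) s := by
  exact ((hf _ (mapsTo_const_add_Icc hs)).comp s
    ((hasDerivAt_id s).const_add m).hasDerivWithinAt mapsTo_const_add_Icc).congr_deriv (mul_one _)

lemma hasDerivWithinAt_comp_const_sub_Icc
    (hf : ∀ x ∈ Icc (m - h) (m + h), HasDerivWithinAt f (f' x) (Icc (m - h) (m + h)) x)
    (hs : s ∈ Icc 0 h) :
    HasDerivWithinAt (fun s => f (m - s)) (-f' (m - s)) (Icc 0 h) s := by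
  exact ((hf _ (mapsTo_const_sub_Icc hs)).comp s
    ((hasDerivAt_id s).const_sub m).hasDerivWithinAt mapsTo_const_sub_Icc).congr_deriv (by simp)

end Symmetrization

theorem simpson_error_eq_integral_simpsonKernel {f f' f'' : ℝ → ℝ} {m h : ℝ} (hh : 0 ≤ h)
    (hf : ∀ x ∈ Icc (m - h) (m + h), HasDerivWithinAt f (f' x) (Icc (m - h) (m + h)) x)
    (hf' : ∀ x ∈ Icc (m - h) (m + h), HasDerivWithinAt f' (f'' x) (Icc (m - h) (m + h)) x)
    (hf'' : ContinuousOn f'' (Icc (m - h) (m + h))) :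
    h / 3 * (f (m - h) + f (m + h)) + 4 * h / 3 * f m - ∫ x in (m - h)..(m + h), f x
      = ∫ s in (0 : ℝ)..h, simpsonKernel h s * (f'' (m + s) + f'' (m - s)) := by
  have hfc : ContinuousOn f (Icc (m - h) (m + h)) := fun x hx => (hf x hx).continuousWithinAt
  rw [integral_simpsonKernel_mul_deriv2 (F := fun s => f (m + s) + f (m - s))
      (F' := fun s => f' (m + s) - f' (m - s)) hh
      (fun s hs => (hasDerivWithinAt_comp_const_add_Icc hf hs).add
        (hasDerivWithinAt_comp_const_sub_Icc hf hs))
      (fun s hs => ((hasDerivWithinAt_comp_const_add_Icc hf' hs).sub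
        (hasDerivWithinAt_comp_const_sub_Icc hf' hs)).congr_deriv (sub_neg_eq_add _ _))
      ((hf''.comp_const_add_Icc.add hf''.comp_const_sub_Icc).intervalIntegrable_of_Icc hh),
    integral_comp_add_add_comp_sub hh hfc]
  simp only [add_zero, sub_zero, sub_self]
  ring

section Convexity

variable {f : ℝ → ℝ} {m h s : ℝ}

lemma ConvexOn.comp_const_add_add_comp_const_sub (hf : ConvexOn ℝ (Icc (m - h) (m + h)) f) :
    ConvexOn ℝ (Icc 0 h) (fun s => f (m + s) + f (m - s)) := by
  refine ⟨convex_Icc 0 h, fun x hx y hy a b ha hb hab => ?_⟩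
  have hadd := hf.2 (mapsTo_const_add_Icc hx) (mapsTo_const_add_Icc hy) ha hb hab
  have hsub := hf.2 (mapsTo_const_sub_Icc hx) (mapsTo_const_sub_Icc hy) ha hb hab
  simp only [smul_eq_mul] at hadd hsub ⊢
  have e₁ : a * (m + x) + b * (m + y) = m + (a * x + b * y) := by linear_combination m * hab
  have e₂ : a * (m - x) + b * (m - y) = m - (a * x + b * y) := by linear_combination m * hab
  rw [e₁] at hadd
  rw [e₂] at hsub
  linarith

lemma ConvexOn.two_mul_le_comp_const_add_add_comp_const_sub
    (hf : ConvexOn ℝ (Icc (m - h) (m + h)) f) (hs : s ∈ Icc 0 h) :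
    2 * f m ≤ f (m + s) + f (m - s) := by
  have := hf.2 (mapsTo_const_add_Icc hs) (mapsTo_const_sub_Icc hs)
    (by norm_num : (0 : ℝ) ≤ 1 / 2) (by norm_num : (0 : ℝ) ≤ 1 / 2) (by norm_num)
  simp only [smul_eq_mul] at this
  rw [show 1 / 2 * (m + s) + 1 / 2 * (m - s) = m by ring] at this
  linarith

lemma ConvexOn.monotoneOn_of_left_le {g : ℝ → ℝ} {a b : ℝ} (hg : ConvexOn ℝ (Icc a b) g)
    (hleft : ∀ x ∈ Icc a b, g a ≤ g x) : MonotoneOn g (Icc a b) := by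
  intro x hx y hy hxy
  rcases hx.1.eq_or_lt with rfl | hax
  · exact hleft y hy
  · exact hg.le_right_of_left_le'' (left_mem_Icc.2 (hx.1.trans hx.2)) hy hax hxy (hleft x hx)

lemma ConvexOn.le_secant {g : ℝ → ℝ} {a b x : ℝ} (hg : ConvexOn ℝ (Icc a b) g)
    (hab : a < b) (hx : x ∈ Icc a b) : g x ≤ g a + (x - a) / (b - a) * (g b - g a) := by
  have hba : 0 < b - a := sub_pos.2 hab
  have ht₀ : 0 ≤ (x - a) / (b - a) := div_nonneg (by linarith [hx.1]) hba.le
  have ht₁ : (x - a) / (b - a) ≤ 1 := (div_le_one hba).2 (by linarith [hx.2])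
  have := hg.2 (left_mem_Icc.2 hab.le) (right_mem_Icc.2 hab.le) (sub_nonneg.2 ht₁) ht₀
    (sub_add_cancel 1 _)
  simp only [smul_eq_mul] at this
  rw [show (1 - (x - a) / (b - a)) * a + (x - a) / (b - a) * b = x by field_simp; ring] at this
  linarith

end Convexity

theorem simpson_stmt12_general (a b : ℝ) (hab : a < b) (φ φ' φ'' φ''' : ℝ → ℝ)
    (hφ' : ∀ x ∈ Set.Icc a b, HasDerivWithinAt φ (φ' x) (Set.Icc a b) x)
    (hφ'' : ∀ x ∈ Set.Icc a b, HasDerivWithinAt φ' (φ'' x) (Set.Icc a b) x)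
    (hφ''' : ∀ x ∈ Set.Icc a b, HasDerivWithinAt φ'' (φ''' x) (Set.Icc a b) x)
    (hconv : ConvexOn ℝ (Set.Icc a b) φ'') :
    0 ≤ (φ a + φ b) / 6 + 2 / 3 * φ ((a + b) / 2) - (1 / (b - a)) * ∫ t in a..b, φ t ∧
      (φ a + φ b) / 6 + 2 / 3 * φ ((a + b) / 2) - (1 / (b - a)) * ∫ t in a..b, φ t ≤
        ((b - a) ^ 2 / 162) * ((φ'' a + φ'' b) / 2 - φ'' ((a + b) / 2)) := by
  obtain ⟨m, h, rfl, rfl, hh⟩ : ∃ m h, a = m - h ∧ b = m + h ∧ 0 < h :=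
    ⟨(a + b) / 2, (b - a) / 2, by ring, by ring, by linarith⟩
  rw [show (m - h + (m + h)) / 2 = m by ring, show m + h - (m - h) = 2 * h by ring]
  set g := fun s => φ'' (m + s) + φ'' (m - s)
  have hφ''c : ContinuousOn φ'' (Icc (m - h) (m + h)) :=
    fun x hx => (hφ''' x hx).continuousWithinAt
  have hgi : IntervalIntegrable g volume 0 h :=
    (hφ''c.comp_const_add_Icc.add hφ''c.comp_const_sub_Icc).intervalIntegrable_of_Icc hh.le
  have hg : ConvexOn ℝ (Icc 0 h) g := hconv.comp_const_add_add_comp_const_sub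
  have hg₀ : ∀ s ∈ Icc 0 h, g 0 ≤ g s := fun s hs => by
    simpa [g, two_mul] using hconv.two_mul_le_comp_const_add_add_comp_const_sub hs
  have herror := simpson_error_eq_integral_simpsonKernel hh.le hφ' hφ'' hφ''c
  have hlower := integral_simpsonKernel_mul_nonneg hh.le (hg.monotoneOn_of_left_le hg₀) hgi
  have hupper := integral_simpsonKernel_mul_le hh hgi hg₀ fun s hs => by
    simpa using hg.le_secant hh hs
  simp only [g, add_zero, sub_zero] at herror hlower hupper hg₀
  have hΔ : 0 ≤ (φ'' (m - h) + φ'' (m + h)) / 2 - φ'' m := by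
    linarith [hg₀ h ⟨hh.le, le_rfl⟩]
  rw [show (φ (m - h) + φ (m + h)) / 6 + 2 / 3 * φ m
        - 1 / (2 * h) * ∫ t in (m - h)..(m + h), φ t
      = (∫ s in (0 : ℝ)..h, simpsonKernel h s * (φ'' (m + s) + φ'' (m - s))) / (2 * h) by
    rw [← herror]; field_simp; ring, div_le_iff₀ (by positivity)]
  refine ⟨by positivity, ?_⟩
  nlinarith [mul_nonneg (pow_pos hh 3).le hΔ]

theorem simpson_stmt12 (a b : ℝ) (hab : a < b) (φ φ' φ'' φ''' φ'''' : ℝ → ℝ)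
    (hφ' : ∀ x ∈ Set.Icc a b, HasDerivWithinAt φ (φ' x) (Set.Icc a b) x)
    (hφ'' : ∀ x ∈ Set.Icc a b, HasDerivWithinAt φ' (φ'' x) (Set.Icc a b) x)
    (hφ''' : ∀ x ∈ Set.Icc a b, HasDerivWithinAt φ'' (φ''' x) (Set.Icc a b) x)
    (hφ'''' : ∀ x ∈ Set.Icc a b, HasDerivWithinAt φ''' (φ'''' x) (Set.Icc a b) x)
    (hcont : ContinuousOn φ'''' (Set.Icc a b))
    (hconv : ConvexOn ℝ (Set.Icc a b) φ'') :
    0 ≤ (φ a + φ b) / 6 + 2 / 3 * φ ((a + b) / 2) - (1 / (b - a)) * ∫ t in a..b, φ t ∧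
      (φ a + φ b) / 6 + 2 / 3 * φ ((a + b) / 2) - (1 / (b - a)) * ∫ t in a..b, φ t ≤
        ((b - a) ^ 2 / 162) * ((φ'' a + φ'' b) / 2 - φ'' ((a + b) / 2)) :=
  simpson_stmt12_general a b hab φ φ' φ'' φ''' hφ' hφ'' hφ''' hconv
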